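/- Let F ⊆ B(o,ρ_0) be a measurable set with λ_d(F) = κ_d which is a Caccioppoli set with constant p_0, let (u_n) be any sequence of unit vectors, and let F_n = S_{U_n}F be the successive Steiner symmetrals of F. Assume that each F_n is a Caccioppoli set with constant p_0. Then the sequence (μ(F_n)) is nonincreasing, and μ(F_n) → μ_d if and only if λ_d(F_n △ B(o,1)) → 0. -/

import Mathlib

open MeasureTheory Metric Filter
open scoped symmDiff ENNReal

/-- The Steiner symmetral of `A` in direction `u`: the union over points `x` of the
hyperplane `u^⊥` of the closed segment on the line `l_u + x` centered at `x` whose length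
is the one-dimensional outer Lebesgue measure of `A ∩ (l_u + x)` (empty if that
intersection is empty). -/
noncomputable def steinerSymmetral (d : ℕ) (u : EuclideanSpace ℝ (Fin d))
    (A : Set (EuclideanSpace ℝ (Fin d))) : Set (EuclideanSpace ℝ (Fin d)) :=
  {z | {t : ℝ | (z - (inner ℝ z u : ℝ) • u) + t • u ∈ A}.Nonempty ∧
    ENNReal.ofReal (2 * |(inner ℝ z u : ℝ)|) ≤
      volume {t : ℝ | (z - (inner ℝ z u : ℝ) • u) + t • u ∈ A}}

/-- The (central) moment of inertia of a set: `μ(A) = ∫_A ‖z‖² dλ_d(z)`. -/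
noncomputable def inertia (d : ℕ) (A : Set (EuclideanSpace ℝ (Fin d))) : ℝ :=
  ∫ z in A, ‖z‖ ^ 2

/-- The normalized surface-area (uniform) probability measure on the unit sphere. -/
noncomputable def sphereUniform (d : ℕ) :
    Measure (sphere (0 : EuclideanSpace ℝ (Fin d)) 1) :=
  ((volume : Measure (EuclideanSpace ℝ (Fin d))).toSphere Set.univ)⁻¹ •
    (volume : Measure (EuclideanSpace ℝ (Fin d))).toSphere

/-- `iterSym d u A n` is the result `S_{U_n}A = S_{u_n}(⋯(S_{u_1}A))` of `n` successive
Steiner symmetrizations of `A` in the directions `u 0, …, u (n-1)`. -/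
noncomputable def iterSym (d : ℕ) (u : ℕ → EuclideanSpace ℝ (Fin d))
    (A : Set (EuclideanSpace ℝ (Fin d))) : ℕ → Set (EuclideanSpace ℝ (Fin d))
  | 0 => A
  | n + 1 => steinerSymmetral d (u n) (iterSym d u A n)

namespace SteinerAux

open Set


variable {n : ℕ}

/-- volume of the 1-dim slice in the first coordinate -/
noncomputable def sliceVol (B : Set (ℝ × (Fin n → ℝ))) (x : Fin n → ℝ) : ℝ≥0∞ :=
  volume {t : ℝ | (t, x) ∈ B}

/-- coordinate Steiner symmetral in the first coordinate -/
def sym1 (B : Set (ℝ × (Fin n → ℝ))) : Set (ℝ × (Fin n → ℝ)) :=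
  {w | {t : ℝ | (t, w.2) ∈ B}.Nonempty ∧ ENNReal.ofReal (2 * |w.1|) ≤ sliceVol B w.2}

def core (B : Set (ℝ × (Fin n → ℝ))) : Set (ℝ × (Fin n → ℝ)) :=
  {w | 0 < sliceVol B w.2 ∧ ENNReal.ofReal (2 * |w.1|) ≤ sliceVol B w.2}

lemma measurable_sliceVol {B : Set (ℝ × (Fin n → ℝ))} (hB : MeasurableSet B) :
    Measurable (sliceVol B) :=
  measurable_measure_prodMk_right hB

lemma core_measurable {B : Set (ℝ × (Fin n → ℝ))} (hB : MeasurableSet B) :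
    MeasurableSet (core B) := by
  have h1 : Measurable fun w : ℝ × (Fin n → ℝ) => sliceVol B w.2 :=
    (measurable_sliceVol hB).comp measurable_snd
  have h2 : Measurable fun w : ℝ × (Fin n → ℝ) => ENNReal.ofReal (2 * |w.1|) :=
    (measurable_fst.abs.const_mul 2).ennreal_ofReal
  have : core B = {w : ℝ × (Fin n → ℝ) | 0 < sliceVol B w.2} ∩
      {w : ℝ × (Fin n → ℝ) | ENNReal.ofReal (2 * |w.1|) ≤ sliceVol B w.2} := rfl
  rw [this]
  exact (measurableSet_lt measurable_const h1).inter (measurableSet_le h2 h1)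

lemma vol_fst_zero : volume {w : ℝ × (Fin n → ℝ) | w.1 = 0} = 0 := by
  have : {w : ℝ × (Fin n → ℝ) | w.1 = 0} = ({0} : Set ℝ) ×ˢ (Set.univ : Set (Fin n → ℝ)) := by
    ext w
    simp only [Set.mem_setOf_eq, Set.mem_prod, Set.mem_singleton_iff, Set.mem_univ, and_true]
  rw [this, Measure.volume_eq_prod, Measure.prod_prod]
  simp

lemma core_subset_sym1 {B : Set (ℝ × (Fin n → ℝ))} : core B ⊆ sym1 B := by
  intro w hw
  refine ⟨?_, hw.2⟩
  by_contra hne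
  rw [Set.not_nonempty_iff_eq_empty] at hne
  have : sliceVol B w.2 = 0 := by rw [sliceVol, hne, measure_empty]
  exact absurd this hw.1.ne'

lemma sym1_diff_core {B : Set (ℝ × (Fin n → ℝ))} :
    sym1 B \ core B ⊆ {w : ℝ × (Fin n → ℝ) | w.1 = 0} := by
  rintro w ⟨⟨hne, hle⟩, hnot⟩
  have h0 : sliceVol B w.2 = 0 := by
    by_contra h
    exact hnot ⟨pos_iff_ne_zero.mpr h, hle⟩
  have : ENNReal.ofReal (2 * |w.1|) = 0 := le_antisymm (h0 ▸ hle) (zero_le)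
  have h2 : 2 * |w.1| ≤ 0 := ENNReal.ofReal_eq_zero.mp this
  have : |w.1| = 0 := le_antisymm (by linarith) (abs_nonneg _)
  simpa [abs_eq_zero] using this

lemma sym1_ae_core {B : Set (ℝ × (Fin n → ℝ))} : sym1 B =ᵐ[volume] core B := by
  rw [← measure_symmDiff_eq_zero_iff]
  refine measure_mono_null ?_ vol_fst_zero
  rw [Set.symmDiff_def]
  refine Set.union_subset sym1_diff_core ?_
  rw [Set.diff_eq_empty.mpr core_subset_sym1]
  exact Set.empty_subset _


lemma bathtub {S : Set ℝ} (hS : MeasurableSet S) (hfin : volume S ≠ ∞) :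
    ∫⁻ t in Icc (-((volume S).toReal / 2)) ((volume S).toReal / 2), ENNReal.ofReal (t ^ 2) ≤
      ∫⁻ t in S, ENNReal.ofReal (t ^ 2) := by
  set r := (volume S).toReal / 2 with hr
  have hr0 : 0 ≤ r := by positivity
  set I := Icc (-r) r with hI
  have hIm : MeasurableSet I := measurableSet_Icc
  have hIvol : volume I = volume S := by
    rw [hI, Real.volume_Icc, ← ENNReal.ofReal_toReal hfin]
    congr 1
    rw [hr]; ring
  have hIfin : volume I ≠ ∞ := by rw [hIvol]; exact hfin
  have hiS : volume (I ∩ S) ≠ ∞ :=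
    ne_top_of_le_ne_top hIfin (measure_mono Set.inter_subset_left)
  have hd1 : volume (I \ S) + volume (I ∩ S) = volume I := measure_diff_add_inter I hS
  have hd2 : volume (S \ I) + volume (S ∩ I) = volume S := measure_diff_add_inter S hIm
  have hkey : volume (I \ S) = volume (S \ I) := by
    have heq : volume (I \ S) + volume (I ∩ S) = volume (S \ I) + volume (I ∩ S) := by
      rw [hd1, hIvol, ← hd2, Set.inter_comm S I]
    exact (ENNReal.add_left_inj hiS).mp heq
  have hdisj1 : Disjoint (I ∩ S) (I \ S) :=
    Set.disjoint_left.mpr fun t ht hD => hD.2 ht.2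
  have hdisj2 : Disjoint (S ∩ I) (S \ I) :=
    Set.disjoint_left.mpr fun t ht hD => hD.2 ht.2
  have hsplitI : ∫⁻ t in I, ENNReal.ofReal (t ^ 2) =
      (∫⁻ t in I ∩ S, ENNReal.ofReal (t ^ 2)) + ∫⁻ t in I \ S, ENNReal.ofReal (t ^ 2) := by
    have := lintegral_union (μ := volume) (f := fun t => ENNReal.ofReal (t ^ 2))
      (hIm.diff hS) hdisj1
    rw [Set.inter_union_diff] at this
    exact this
  have hsplitS : ∫⁻ t in S, ENNReal.ofReal (t ^ 2) =
      (∫⁻ t in S ∩ I, ENNReal.ofReal (t ^ 2)) + ∫⁻ t in S \ I, ENNReal.ofReal (t ^ 2) := by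
    have := lintegral_union (μ := volume) (f := fun t => ENNReal.ofReal (t ^ 2))
      (hS.diff hIm) hdisj2
    rw [Set.inter_union_diff] at this
    exact this
  have hb1 : ∫⁻ t in I \ S, ENNReal.ofReal (t ^ 2) ≤ ENNReal.ofReal (r ^ 2) * volume (I \ S) := by
    have := setLIntegral_mono' (μ := volume) (hIm.diff hS)
      (f := fun t => ENNReal.ofReal (t ^ 2)) (g := fun _ => ENNReal.ofReal (r ^ 2))
      (fun t ht => by
        have h1 : |t| ≤ r := abs_le.mpr ⟨ht.1.1, ht.1.2⟩
        refine ENNReal.ofReal_le_ofReal ?_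
        calc t ^ 2 = |t| ^ 2 := (sq_abs t).symm
          _ ≤ r ^ 2 := pow_le_pow_left₀ (abs_nonneg t) h1 2)
    rwa [setLIntegral_const] at this
  have hb2 : ENNReal.ofReal (r ^ 2) * volume (S \ I) ≤ ∫⁻ t in S \ I, ENNReal.ofReal (t ^ 2) := by
    rw [← setLIntegral_const]
    refine setLIntegral_mono' (hS.diff hIm) fun t ht => ?_
    have h1 : r ≤ |t| := by
      by_contra hcon
      push_neg at hcon
      have := abs_lt.mp hcon
      exact ht.2 ⟨this.1.le, this.2.le⟩
    refine ENNReal.ofReal_le_ofReal ?_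
    calc r ^ 2 ≤ |t| ^ 2 := pow_le_pow_left₀ hr0 h1 2
      _ = t ^ 2 := sq_abs t
  calc ∫⁻ t in I, ENNReal.ofReal (t ^ 2)
      = (∫⁻ t in I ∩ S, ENNReal.ofReal (t ^ 2)) + ∫⁻ t in I \ S, ENNReal.ofReal (t ^ 2) := hsplitI
    _ ≤ (∫⁻ t in I ∩ S, ENNReal.ofReal (t ^ 2)) + ENNReal.ofReal (r ^ 2) * volume (I \ S) :=
        add_le_add le_rfl hb1
    _ = (∫⁻ t in S ∩ I, ENNReal.ofReal (t ^ 2)) + ENNReal.ofReal (r ^ 2) * volume (S \ I) := by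
        rw [Set.inter_comm, hkey]
    _ ≤ (∫⁻ t in S ∩ I, ENNReal.ofReal (t ^ 2)) + ∫⁻ t in S \ I, ENNReal.ofReal (t ^ 2) :=
        add_le_add le_rfl hb2
    _ = ∫⁻ t in S, ENNReal.ofReal (t ^ 2) := hsplitS.symm

lemma core_slice_vol {B : Set (ℝ × (Fin n → ℝ))} {x : Fin n → ℝ}
    (hfin : sliceVol B x ≠ ∞) :
    volume {t : ℝ | (t, x) ∈ core B} = sliceVol B x := by
  rcases eq_or_ne (sliceVol B x) 0 with h0 | hpos
  · have : {t : ℝ | (t, x) ∈ core B} = ∅ := by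
      ext t; simp [core, h0]
    rw [this, measure_empty, h0]
  · have hset : {t : ℝ | (t, x) ∈ core B} =
        Icc (-((sliceVol B x).toReal / 2)) ((sliceVol B x).toReal / 2) := by
      ext t
      simp only [core, Set.mem_setOf_eq, Set.mem_Icc]
      constructor
      · rintro ⟨-, hle⟩
        have h2 : 2 * |t| ≤ (sliceVol B x).toReal :=
          (ENNReal.ofReal_le_iff_le_toReal hfin).mp hle
        have := abs_le.mp (by linarith : |t| ≤ (sliceVol B x).toReal / 2)
        exact this
      · rintro ⟨h1, h2⟩
        refine ⟨pos_iff_ne_zero.mpr hpos, ?_⟩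
        rw [ENNReal.ofReal_le_iff_le_toReal hfin]
        have : |t| ≤ (sliceVol B x).toReal / 2 := abs_le.mpr ⟨h1, h2⟩
        linarith
    rw [hset, Real.volume_Icc]
    have heq : (sliceVol B x).toReal / 2 - -((sliceVol B x).toReal / 2)
        = (sliceVol B x).toReal := by ring
    rw [heq, ENNReal.ofReal_toReal hfin]

lemma core_slice_lint {B : Set (ℝ × (Fin n → ℝ))} (hB : MeasurableSet B) {x : Fin n → ℝ}
    (hfin : sliceVol B x ≠ ∞) :
    ∫⁻ t in {t : ℝ | (t, x) ∈ core B}, ENNReal.ofReal (t ^ 2) ≤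
      ∫⁻ t in {t : ℝ | (t, x) ∈ B}, ENNReal.ofReal (t ^ 2) := by
  rcases eq_or_ne (sliceVol B x) 0 with h0 | hpos
  · have : {t : ℝ | (t, x) ∈ core B} = ∅ := by
      ext t; simp [core, h0]
    rw [this]
    simp
  · have hset : {t : ℝ | (t, x) ∈ core B} =
        Icc (-((sliceVol B x).toReal / 2)) ((sliceVol B x).toReal / 2) := by
      ext t
      simp only [core, Set.mem_setOf_eq, Set.mem_Icc]
      constructor
      · rintro ⟨-, hle⟩
        have h2 : 2 * |t| ≤ (sliceVol B x).toReal :=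
          (ENNReal.ofReal_le_iff_le_toReal hfin).mp hle
        exact abs_le.mp (by linarith : |t| ≤ (sliceVol B x).toReal / 2)
      · rintro ⟨h1, h2⟩
        refine ⟨pos_iff_ne_zero.mpr hpos, ?_⟩
        rw [ENNReal.ofReal_le_iff_le_toReal hfin]
        have : |t| ≤ (sliceVol B x).toReal / 2 := abs_le.mpr ⟨h1, h2⟩
        linarith
    rw [hset]
    exact bathtub (hB.preimage measurable_prodMk_right) hfin

lemma slicing {B : Set (ℝ × (Fin n → ℝ))} (hB : MeasurableSet B)
    {g : (Fin n → ℝ) → ℝ≥0∞} (hg : Measurable g) :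
    ∫⁻ w in B, (ENNReal.ofReal (w.1 ^ 2) + g w.2) =
      ∫⁻ x, ((∫⁻ t in {t : ℝ | (t, x) ∈ B}, ENNReal.ofReal (t ^ 2)) +
        g x * volume {t : ℝ | (t, x) ∈ B}) := by
  have hf : Measurable fun w : ℝ × (Fin n → ℝ) => ENNReal.ofReal (w.1 ^ 2) + g w.2 :=
    ((measurable_fst.pow_const 2).ennreal_ofReal).add (hg.comp measurable_snd)
  rw [← lintegral_indicator hB, Measure.volume_eq_prod,
    lintegral_prod_symm _ ((hf.indicator hB).aemeasurable)]
  refine lintegral_congr fun x => ?_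
  have hsm : MeasurableSet {t : ℝ | (t, x) ∈ B} := hB.preimage measurable_prodMk_right
  have hpt : ∀ t : ℝ, B.indicator (fun w : ℝ × (Fin n → ℝ) =>
      ENNReal.ofReal (w.1 ^ 2) + g w.2) (t, x)
      = {t : ℝ | (t, x) ∈ B}.indicator (fun t => ENNReal.ofReal (t ^ 2) + g x) t := by
    intro t
    have hmem : t ∈ {t : ℝ | (t, x) ∈ B} ↔ (t, x) ∈ B := Iff.rfl
    by_cases h : (t, x) ∈ B
    · simp [Set.indicator_apply, h]
    · simp [Set.indicator_apply, h]
  simp_rw [hpt]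
  rw [lintegral_indicator hsm, lintegral_add_right _ measurable_const, setLIntegral_const]

lemma vol_core {B : Set (ℝ × (Fin n → ℝ))} (hB : MeasurableSet B)
    (hfin : ∀ x, sliceVol B x ≠ ∞) : volume (core B) = volume B := by
  rw [Measure.volume_eq_prod, Measure.prod_apply_symm (core_measurable hB),
    Measure.prod_apply_symm hB]
  refine lintegral_congr fun x => ?_
  exact core_slice_vol (hfin x)

lemma lint_core_le {B : Set (ℝ × (Fin n → ℝ))} (hB : MeasurableSet B)
    (hfin : ∀ x, sliceVol B x ≠ ∞) {g : (Fin n → ℝ) → ℝ≥0∞} (hg : Measurable g) :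
    ∫⁻ w in core B, (ENNReal.ofReal (w.1 ^ 2) + g w.2) ≤
      ∫⁻ w in B, (ENNReal.ofReal (w.1 ^ 2) + g w.2) := by
  rw [slicing (core_measurable hB) hg, slicing hB hg]
  refine lintegral_mono fun x => ?_
  refine add_le_add (core_slice_lint hB (hfin x)) (le_of_eq ?_)
  rw [core_slice_vol (hfin x)]
  rfl

lemma sym1_subset {B : Set (ℝ × (Fin n → ℝ))} {Q : (Fin n → ℝ) → ℝ} {c : ℝ}
    (hbound : B ⊆ {w : ℝ × (Fin n → ℝ) | w.1 ^ 2 + Q w.2 ≤ c}) :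
    sym1 B ⊆ {w : ℝ × (Fin n → ℝ) | w.1 ^ 2 + Q w.2 ≤ c} := by
  rintro ⟨s, x⟩ ⟨⟨t₀, ht₀⟩, hle⟩
  have hb0 : t₀ ^ 2 + Q x ≤ c := hbound ht₀
  have hc'0 : 0 ≤ c - Q x := by nlinarith [sq_nonneg t₀]
  have hslice : {t : ℝ | (t, x) ∈ B} ⊆ Icc (-Real.sqrt (c - Q x)) (Real.sqrt (c - Q x)) := by
    intro t ht
    have h1 : t ^ 2 ≤ c - Q x := by have := hbound ht; simp only [Set.mem_setOf_eq] at this; linarith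
    have h2 : |t| ≤ Real.sqrt (c - Q x) := by
      rw [← Real.sqrt_sq_eq_abs]
      exact Real.sqrt_le_sqrt h1
    exact abs_le.mp h2
  have hv : sliceVol B x ≤ ENNReal.ofReal (2 * Real.sqrt (c - Q x)) := by
    calc sliceVol B x ≤ volume (Icc (-Real.sqrt (c - Q x)) (Real.sqrt (c - Q x))) :=
          measure_mono hslice
      _ = ENNReal.ofReal (2 * Real.sqrt (c - Q x)) := by
          rw [Real.volume_Icc]; congr 1; ring
  have hle2 : ENNReal.ofReal (2 * |s|) ≤ ENNReal.ofReal (2 * Real.sqrt (c - Q x)) := hle.trans hv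
  have habs : 2 * |s| ≤ 2 * Real.sqrt (c - Q x) := by
    rw [ENNReal.ofReal_le_ofReal_iff (by positivity)] at hle2
    exact hle2
  have habs2 : |s| ≤ Real.sqrt (c - Q x) := by linarith
  have hs2 : s ^ 2 ≤ c - Q x := by
    calc s ^ 2 = |s| ^ 2 := (sq_abs s).symm
      _ ≤ Real.sqrt (c - Q x) ^ 2 := pow_le_pow_left₀ (abs_nonneg s) habs2 2
      _ = c - Q x := Real.sq_sqrt hc'0
  show s ^ 2 + Q x ≤ c
  linarith

lemma sym1_congr {B B' : Set (ℝ × (Fin n → ℝ))} (h : volume (B ∆ B') = 0) :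
    volume (sym1 B ∆ sym1 B') = 0 := by
  obtain ⟨N, hNsub, hNmeas, hNvol⟩ := exists_measurable_superset_of_null h
  have hbadvol : volume {x : Fin n → ℝ | sliceVol N x ≠ 0} = 0 := by
    have h0 : ∫⁻ x, sliceVol N x = 0 := by
      have hps := Measure.prod_apply_symm (μ := (volume : Measure ℝ))
        (ν := (volume : Measure (Fin n → ℝ))) hNmeas
      calc ∫⁻ x, sliceVol N x
          = ((volume : Measure ℝ).prod (volume : Measure (Fin n → ℝ))) N := hps.symm
        _ = volume N := by rw [← Measure.volume_eq_prod]
        _ = 0 := hNvol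
    have hae := (lintegral_eq_zero_iff (measurable_sliceVol hNmeas)).mp h0
    exact hae
  have hmain : sym1 B ∆ sym1 B' ⊆
      {w : ℝ × (Fin n → ℝ) | w.1 = 0} ∪ {w : ℝ × (Fin n → ℝ) | sliceVol N w.2 ≠ 0} := by
    intro w hw
    by_cases hb : sliceVol N w.2 ≠ 0
    · exact Or.inr hb
    · left
      push_neg at hb
      have key : ∀ {C C' : Set (ℝ × (Fin n → ℝ))}, C \ C' ⊆ N →
          sliceVol C w.2 ≤ sliceVol C' w.2 := by
        intro C C' hCC'
        have hsub2 : {t : ℝ | (t, w.2) ∈ C} ⊆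
            {t : ℝ | (t, w.2) ∈ C'} ∪ {t : ℝ | (t, w.2) ∈ N} := by
          intro t ht
          by_cases hc : (t, w.2) ∈ C'
          · exact Or.inl hc
          · exact Or.inr (hCC' ⟨ht, hc⟩)
        calc sliceVol C w.2 ≤ volume ({t : ℝ | (t, w.2) ∈ C'} ∪ {t : ℝ | (t, w.2) ∈ N}) :=
              measure_mono hsub2
          _ ≤ sliceVol C' w.2 + sliceVol N w.2 := measure_union_le _ _
          _ = sliceVol C' w.2 := by rw [hb, add_zero]
      have hEq : sliceVol B w.2 = sliceVol B' w.2 := by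
        refine le_antisymm (key ?_) (key ?_)
        · exact fun z hz => hNsub (by rw [Set.symmDiff_def]; exact Or.inl hz)
        · exact fun z hz => hNsub (by rw [Set.symmDiff_def]; exact Or.inr hz)
      have main2 : ∀ {C C' : Set (ℝ × (Fin n → ℝ))}, sliceVol C w.2 = sliceVol C' w.2 →
          w ∈ sym1 C → w ∉ sym1 C' → w.1 = 0 := by
        intro C C' hCC' ⟨hne, hle⟩ hnot
        by_contra hw1
        have hpos : 0 < ENNReal.ofReal (2 * |w.1|) := by
          rw [ENNReal.ofReal_pos]
          have : 0 < |w.1| := abs_pos.mpr hw1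
          linarith
        have hpos' : 0 < sliceVol C' w.2 := lt_of_lt_of_le hpos (hCC' ▸ hle)
        refine hnot ⟨?_, hCC' ▸ hle⟩
        by_contra hne'
        rw [Set.not_nonempty_iff_eq_empty] at hne'
        have : sliceVol C' w.2 = 0 := by rw [sliceVol, hne', measure_empty]
        exact absurd this hpos'.ne'
      rcases hw with hw | hw
      · exact main2 hEq hw.1 hw.2
      · exact (main2 hEq.symm hw.1 hw.2)
  refine measure_mono_null hmain (measure_union_null vol_fst_zero ?_)
  have : {w : ℝ × (Fin n → ℝ) | sliceVol N w.2 ≠ 0}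
      = (Set.univ : Set ℝ) ×ˢ {x : Fin n → ℝ | sliceVol N x ≠ 0} := by
    ext w
    simp only [Set.mem_setOf_eq, Set.mem_prod, Set.mem_univ, true_and]
  rw [this, Measure.volume_eq_prod, Measure.prod_prod, hbadvol, mul_zero]


section Generic

variable {α : Type*} [MeasurableSpace α] {μ : Measure α}

lemma lint_split {A B : Set α} (hA : NullMeasurableSet A μ) (hB : NullMeasurableSet B μ)
    (f : α → ℝ≥0∞) :
    ∫⁻ z in A, f z ∂μ = (∫⁻ z in A ∩ B, f z ∂μ) + ∫⁻ z in A \ B, f z ∂μ := by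
  have hTm : MeasurableSet (toMeasurable μ A) := measurableSet_toMeasurable μ A
  have hUm : MeasurableSet (toMeasurable μ B) := measurableSet_toMeasurable μ B
  have e0 : A =ᵐ[μ] toMeasurable μ A := hA.toMeasurable_ae_eq.symm
  have e0' : B =ᵐ[μ] toMeasurable μ B := hB.toMeasurable_ae_eq.symm
  have e1 : (A ∩ B : Set α) =ᵐ[μ] (toMeasurable μ A ∩ toMeasurable μ B : Set α) :=
    ae_eq_set_inter e0 e0'
  have e2 : (A \ B : Set α) =ᵐ[μ] (toMeasurable μ A \ toMeasurable μ B : Set α) := by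
    rw [Set.diff_eq, Set.diff_eq]
    exact ae_eq_set_inter e0 (ae_eq_set_compl_compl.mpr e0')
  rw [setLIntegral_congr e0, setLIntegral_congr e1, setLIntegral_congr e2]
  have hdisj : Disjoint (toMeasurable μ A ∩ toMeasurable μ B)
      (toMeasurable μ A \ toMeasurable μ B) :=
    Set.disjoint_left.mpr fun t ht hD => hD.2 ht.2
  have := lintegral_union (μ := μ) (f := f) (hTm.diff hUm) hdisj
  rw [Set.inter_union_diff] at this
  exact this

lemma meas_split {A B : Set α} (hA : NullMeasurableSet A μ) (hB : NullMeasurableSet B μ) :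
    μ A = μ (A ∩ B) + μ (A \ B) := by
  have := lint_split hA hB (fun _ => 1)
  simpa [setLIntegral_one] using this

lemma setLIntegral_le_bound {A S : Set α} {f : α → ℝ≥0∞} {c : ℝ≥0∞}
    (hS : MeasurableSet S) (hsub : A ⊆ S) (hbd : ∀ z ∈ S, f z ≤ c) :
    ∫⁻ z in A, f z ∂μ ≤ c * μ A := by
  have h1 : A ⊆ toMeasurable μ A ∩ S := Set.subset_inter (subset_toMeasurable μ A) hsub
  calc ∫⁻ z in A, f z ∂μ ≤ ∫⁻ z in toMeasurable μ A ∩ S, f z ∂μ := lintegral_mono_set h1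
    _ ≤ ∫⁻ _ in toMeasurable μ A ∩ S, c ∂μ :=
        setLIntegral_mono' ((measurableSet_toMeasurable μ A).inter hS) fun z hz => hbd z hz.2
    _ = c * μ (toMeasurable μ A ∩ S) := setLIntegral_const _ _
    _ ≤ c * μ (toMeasurable μ A) := mul_le_mul_right (measure_mono Set.inter_subset_left) c
    _ = c * μ A := by rw [measure_toMeasurable]

lemma setLIntegral_ge_bound {A S : Set α} {f : α → ℝ≥0∞} {c : ℝ≥0∞}
    (hA : NullMeasurableSet A μ) (hS : MeasurableSet S) (hsub : A ⊆ S)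
    (hbd : ∀ z ∈ S, c ≤ f z) :
    c * μ A ≤ ∫⁻ z in A, f z ∂μ := by
  have h0 : A =ᵐ[μ] (toMeasurable μ A ∩ S : Set α) := by
    have e : A ∩ S = A := Set.inter_eq_self_of_subset_left hsub
    have h' : (A ∩ S : Set α) =ᵐ[μ] (toMeasurable μ A ∩ S : Set α) :=
      ae_eq_set_inter (hA.toMeasurable_ae_eq.symm) (ae_eq_refl S)
    rwa [e] at h'
  rw [setLIntegral_congr h0, measure_congr h0]
  calc c * μ (toMeasurable μ A ∩ S) = ∫⁻ _ in toMeasurable μ A ∩ S, c ∂μ :=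
        (setLIntegral_const _ _).symm
    _ ≤ ∫⁻ z in toMeasurable μ A ∩ S, f z ∂μ :=
        setLIntegral_mono' ((measurableSet_toMeasurable μ A).inter hS) fun z hz => hbd z hz.2

end Generic

/-- The main step lemma: one Steiner symmetrization preserves null-measurability,
boundedness, and volume, and does not increase the moment of inertia. -/
lemma step {n : ℕ} {ρ : ℝ} (hρ : 0 ≤ ρ)
    {u : EuclideanSpace ℝ (Fin (n + 1))} (hu : ‖u‖ = 1)
    {A : Set (EuclideanSpace ℝ (Fin (n + 1)))} (hA : NullMeasurableSet A volume)
    (hsub : A ⊆ closedBall 0 ρ) :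
    NullMeasurableSet (steinerSymmetral (n + 1) u A) volume ∧
      steinerSymmetral (n + 1) u A ⊆ closedBall 0 ρ ∧
      volume (steinerSymmetral (n + 1) u A) = volume A ∧
      (∫⁻ z in steinerSymmetral (n + 1) u A, ENNReal.ofReal (‖z‖ ^ 2)) ≤
        ∫⁻ z in A, ENNReal.ofReal (‖z‖ ^ 2) := by
  classical
  -- an orthonormal basis whose first vector is `u`
  obtain ⟨b, hb0⟩ : ∃ b : OrthonormalBasis (Fin (n + 1)) ℝ (EuclideanSpace ℝ (Fin (n + 1))),
      b 0 = u := by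
    have hcard : Module.finrank ℝ (EuclideanSpace ℝ (Fin (n + 1)))
        = Fintype.card (Fin (n + 1)) := by
      simp [finrank_euclideanSpace]
    have horth : Orthonormal ℝ (({0} : Set (Fin (n + 1))).restrict fun _ => u) := by
      constructor
      · intro i; exact hu
      · intro i j hij
        exact absurd (Subsingleton.elim i j) hij
    obtain ⟨b, hb⟩ := horth.exists_orthonormalBasis_extension_of_card_eq hcard
    exact ⟨b, hb 0 rfl⟩
  set Φ : EuclideanSpace ℝ (Fin (n + 1)) ≃ᵐ ℝ × (Fin n → ℝ) :=
    (b.measurableEquiv.trans (MeasurableEquiv.toLp 2 (Fin (n + 1) → ℝ)).symm).trans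
      (MeasurableEquiv.piFinSuccAbove (fun _ => ℝ) 0) with hΦdef
  have hΦapp : ∀ z, Φ z = (b.repr z 0, fun j : Fin n => b.repr z j.succ) := fun z => rfl
  have hfst : ∀ z : EuclideanSpace ℝ (Fin (n + 1)), b.repr z 0 = (inner ℝ z u : ℝ) := by
    intro z
    rw [b.repr_apply_apply, ← hb0]
    exact real_inner_comm _ _
  have hrepru : b.repr u = EuclideanSpace.single (0 : Fin (n + 1)) (1 : ℝ) := by
    rw [← hb0, b.repr_self]
  have hk2 : ∀ (z : EuclideanSpace ℝ (Fin (n + 1))) (t : ℝ),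
      Φ ((z - (inner ℝ z u : ℝ) • u) + t • u) = (t, (Φ z).2) := by
    intro z t
    rw [hΦapp, hΦapp]
    have hco : ∀ k : Fin (n + 1), b.repr ((z - (inner ℝ z u : ℝ) • u) + t • u) k
        = b.repr z k - (inner ℝ z u : ℝ) * b.repr u k + t * b.repr u k := by
      intro k
      have hcv : b.repr ((z - (inner ℝ z u : ℝ) • u) + t • u)
          = b.repr z - (inner ℝ z u : ℝ) • b.repr u + t • b.repr u := by
        rw [map_add, map_sub, _root_.map_smul, _root_.map_smul]
      rw [hcv]
      simp [PiLp.add_apply, PiLp.sub_apply, PiLp.smul_apply, smul_eq_mul]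
    refine Prod.ext ?_ ?_
    · show b.repr ((z - (inner ℝ z u : ℝ) • u) + t • u) 0 = t
      rw [hco 0, hrepru, hfst z]
      simp [EuclideanSpace.single_apply]
    · show (fun j : Fin n => b.repr ((z - (inner ℝ z u : ℝ) • u) + t • u) j.succ)
        = fun j : Fin n => b.repr z j.succ
      funext j
      rw [hco j.succ, hrepru]
      simp [EuclideanSpace.single_apply, Fin.succ_ne_zero]
  have hk3 : ∀ z : EuclideanSpace ℝ (Fin (n + 1)),
      ‖z‖ ^ 2 = (Φ z).1 ^ 2 + ∑ j : Fin n, ((Φ z).2 j) ^ 2 := by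
    intro z
    have h1 : ‖z‖ = ‖b.repr z‖ := (b.repr.norm_map z).symm
    have h2 : ‖b.repr z‖ ^ 2 = ∑ i : Fin (n + 1), (b.repr z i) ^ 2 := by
      rw [EuclideanSpace.norm_eq, Real.sq_sqrt (by positivity)]
      refine Finset.sum_congr rfl fun i _ => ?_
      rw [Real.norm_eq_abs, sq_abs]
    rw [h1, h2, Fin.sum_univ_succ, hΦapp]
  have hk4 : ∀ (C : Set (EuclideanSpace ℝ (Fin (n + 1)))) (z : EuclideanSpace ℝ (Fin (n + 1))),
      z ∈ steinerSymmetral (n + 1) u C ↔ Φ z ∈ sym1 (Φ '' C) := by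
    intro C z
    have hset : {t : ℝ | (z - (inner ℝ z u : ℝ) • u) + t • u ∈ C}
        = {t : ℝ | (t, (Φ z).2) ∈ Φ '' C} := by
      ext t
      simp only [Set.mem_setOf_eq]
      constructor
      · intro h
        exact ⟨_, h, hk2 z t⟩
      · rintro ⟨w, hw, hwe⟩
        have h1 : Φ ((z - (inner ℝ z u : ℝ) • u) + t • u) = Φ w := by rw [hk2 z t, hwe]
        have h2 := Φ.injective h1
        rw [h2]
        exact hw
    have hfst' : (Φ z).1 = (inner ℝ z u : ℝ) := by rw [hΦapp]; exact hfst z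
    constructor
    · rintro ⟨h1, h2⟩
      rw [hset] at h1 h2
      refine ⟨h1, ?_⟩
      rw [hfst']
      exact h2
    · rintro ⟨h1, h2⟩
      rw [← hset] at h1
      refine ⟨h1, ?_⟩
      rw [hfst'] at h2
      rw [hset]
      exact h2
  have hmp : MeasurePreserving Φ volume volume := by
    have h1 := b.measurePreserving_measurableEquiv
    have h2 := EuclideanSpace.volume_preserving_symm_measurableEquiv_toLp (Fin (n + 1))
    have h3 := volume_preserving_piFinSuccAbove (fun _ : Fin (n + 1) => ℝ) 0
    exact (h3.comp (h2.comp h1) : _)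
  have himg : ∀ s : Set (EuclideanSpace ℝ (Fin (n + 1))), volume (Φ '' s) = volume s := by
    intro s
    rw [MeasurableEquiv.image_eq_preimage_symm]
    exact (hmp.symm Φ).measure_preimage_emb Φ.symm.measurableEmbedding s
  set gfun : (Fin n → ℝ) → ℝ≥0∞ := fun x => ENNReal.ofReal (∑ j : Fin n, (x j) ^ 2)
    with hgdef
  have hgmeas : Measurable gfun := by
    refine Measurable.ennreal_ofReal ?_
    exact Finset.measurable_sum _ fun j _ => (measurable_pi_apply j).pow_const 2
  have hlint : ∀ s : Set (EuclideanSpace ℝ (Fin (n + 1))),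
      ∫⁻ z in s, ENNReal.ofReal (‖z‖ ^ 2) =
        ∫⁻ w in Φ '' s, (ENNReal.ofReal (w.1 ^ 2) + gfun w.2) := by
    intro s
    have := hmp.setLIntegral_comp_emb Φ.measurableEmbedding
      (fun w : ℝ × (Fin n → ℝ) => ENNReal.ofReal (w.1 ^ 2) + gfun w.2) s
    rw [← this]
    refine lintegral_congr fun z => ?_
    rw [hgdef]
    show ENNReal.ofReal (‖z‖ ^ 2)
      = ENNReal.ofReal ((Φ z).1 ^ 2) + ENNReal.ofReal (∑ j : Fin n, ((Φ z).2 j) ^ 2)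
    rw [hk3 z, ENNReal.ofReal_add (by positivity) (by positivity)]
  -- measurable version of A
  set A₀ : Set (EuclideanSpace ℝ (Fin (n + 1))) := toMeasurable volume A ∩ closedBall 0 ρ
    with hA₀def
  have hA₀meas : MeasurableSet A₀ :=
    (measurableSet_toMeasurable _ _).inter measurableSet_closedBall
  have hae : A =ᵐ[volume] A₀ := by
    have e : A ∩ closedBall 0 ρ = A := Set.inter_eq_self_of_subset_left hsub
    have h' : (A ∩ closedBall 0 ρ : Set _) =ᵐ[volume] A₀ :=
      ae_eq_set_inter (hA.toMeasurable_ae_eq.symm) (ae_eq_refl _)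
    rwa [e] at h'
  have hA₀sub : A₀ ⊆ closedBall 0 ρ := Set.inter_subset_right
  -- bound set in coordinates
  set W : Set (ℝ × (Fin n → ℝ)) := {w | w.1 ^ 2 + ∑ j : Fin n, (w.2 j) ^ 2 ≤ ρ ^ 2}
    with hWdef
  have himgball : ∀ (C : Set (EuclideanSpace ℝ (Fin (n + 1)))), C ⊆ closedBall 0 ρ →
      Φ '' C ⊆ W := by
    rintro C hC w ⟨z, hz, rfl⟩
    have h1 : ‖z‖ ≤ ρ := mem_closedBall_zero_iff.mp (hC hz)
    have h2 : ‖z‖ ^ 2 ≤ ρ ^ 2 := pow_le_pow_left₀ (norm_nonneg z) h1 2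
    show (Φ z).1 ^ 2 + ∑ j : Fin n, ((Φ z).2 j) ^ 2 ≤ ρ ^ 2
    rw [← hk3 z]
    exact h2
  set B₀ : Set (ℝ × (Fin n → ℝ)) := Φ '' A₀ with hB₀def
  have hB₀meas : MeasurableSet B₀ := by
    rw [hB₀def, MeasurableEquiv.image_eq_preimage_symm]
    exact Φ.symm.measurable hA₀meas
  have hB₀sub : B₀ ⊆ W := himgball A₀ hA₀sub
  have hfinslice : ∀ (C : Set (ℝ × (Fin n → ℝ))), C ⊆ W → ∀ x, sliceVol C x ≠ ∞ := by
    intro C hC x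
    have hss : {t : ℝ | (t, x) ∈ C} ⊆ Icc (-ρ) ρ := by
      intro t ht
      have h1 : t ^ 2 + ∑ j : Fin n, (x j) ^ 2 ≤ ρ ^ 2 := hC ht
      have h2 : t ^ 2 ≤ ρ ^ 2 := by
        have : (0:ℝ) ≤ ∑ j : Fin n, (x j) ^ 2 := by positivity
        linarith
      have h3 : |t| ≤ ρ := by
        by_contra hcon
        push_neg at hcon
        have h4 : ρ ^ 2 < |t| ^ 2 := by nlinarith [abs_nonneg t]
        rw [sq_abs] at h4
        linarith
      exact abs_le.mp h3
    refine ne_top_of_le_ne_top ?_ (measure_mono hss)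
    rw [Real.volume_Icc]
    exact ENNReal.ofReal_ne_top
  have hB₀fin : ∀ x, sliceVol B₀ x ≠ ∞ := hfinslice B₀ hB₀sub
  -- images of the symmetrals
  have himgS : ∀ C : Set (EuclideanSpace ℝ (Fin (n + 1))),
      Φ '' steinerSymmetral (n + 1) u C = sym1 (Φ '' C) := by
    intro C
    ext w
    constructor
    · rintro ⟨z, hz, rfl⟩
      exact (hk4 C z).mp hz
    · intro hw
      refine ⟨Φ.symm w, ?_, Φ.apply_symm_apply w⟩
      rw [hk4 C (Φ.symm w), Φ.apply_symm_apply]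
      exact hw
  -- a.e. equality of the two symmetrals
  have haediff : volume (steinerSymmetral (n + 1) u A ∆ steinerSymmetral (n + 1) u A₀) = 0 := by
    have h1 : volume ((Φ '' steinerSymmetral (n + 1) u A) ∆ (Φ '' steinerSymmetral (n + 1) u A₀))
        = 0 := by
      rw [himgS A, himgS A₀]
      refine sym1_congr ?_
      rw [← Set.image_symmDiff Φ.injective, himg]
      exact measure_symmDiff_eq_zero_iff.mpr hae
    rw [← Set.image_symmDiff Φ.injective, himg] at h1
    exact h1
  have haeS : steinerSymmetral (n + 1) u A =ᵐ[volume] steinerSymmetral (n + 1) u A₀ :=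
    measure_symmDiff_eq_zero_iff.mp haediff
  -- null-measurability
  have hS₀eq : steinerSymmetral (n + 1) u A₀ = Φ ⁻¹' sym1 B₀ := by
    rw [← himgS A₀, Set.preimage_image_eq _ Φ.injective]
  have hsym1nm : NullMeasurableSet (sym1 B₀) volume :=
    (core_measurable hB₀meas).nullMeasurableSet.congr sym1_ae_core.symm
  have hS₀nm : NullMeasurableSet (steinerSymmetral (n + 1) u A₀) volume := by
    rw [hS₀eq]
    exact hsym1nm.preimage hmp.quasiMeasurePreserving
  have hSnm : NullMeasurableSet (steinerSymmetral (n + 1) u A) volume :=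
    hS₀nm.congr haeS.symm
  refine ⟨hSnm, ?_, ?_, ?_⟩
  -- boundedness
  · intro z hz
    have h1 : Φ z ∈ sym1 (Φ '' A) := (hk4 A z).mp hz
    have h2 : Φ z ∈ W :=
      sym1_subset (Q := fun x : Fin n → ℝ => ∑ j : Fin n, (x j) ^ 2) (c := ρ ^ 2)
        (himgball A hsub) h1
    have h3 : ‖z‖ ^ 2 ≤ ρ ^ 2 := by
      rw [hk3 z]
      exact h2
    rw [mem_closedBall_zero_iff]
    by_contra hcon
    push_neg at hcon
    have h4 : ρ ^ 2 < ‖z‖ ^ 2 := by nlinarith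
    linarith
  -- volume
  · calc volume (steinerSymmetral (n + 1) u A)
        = volume (steinerSymmetral (n + 1) u A₀) := measure_congr haeS
      _ = volume (Φ '' steinerSymmetral (n + 1) u A₀) := (himg _).symm
      _ = volume (sym1 B₀) := by rw [himgS A₀]
      _ = volume (core B₀) := measure_congr sym1_ae_core
      _ = volume B₀ := vol_core hB₀meas hB₀fin
      _ = volume A₀ := himg A₀
      _ = volume A := (measure_congr hae).symm
  -- inertia
  · calc ∫⁻ z in steinerSymmetral (n + 1) u A, ENNReal.ofReal (‖z‖ ^ 2)
        = ∫⁻ z in steinerSymmetral (n + 1) u A₀, ENNReal.ofReal (‖z‖ ^ 2) :=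
          setLIntegral_congr haeS
      _ = ∫⁻ w in Φ '' steinerSymmetral (n + 1) u A₀,
            (ENNReal.ofReal (w.1 ^ 2) + gfun w.2) := hlint _
      _ = ∫⁻ w in sym1 B₀, (ENNReal.ofReal (w.1 ^ 2) + gfun w.2) := by rw [himgS A₀]
      _ = ∫⁻ w in core B₀, (ENNReal.ofReal (w.1 ^ 2) + gfun w.2) :=
          setLIntegral_congr sym1_ae_core
      _ ≤ ∫⁻ w in B₀, (ENNReal.ofReal (w.1 ^ 2) + gfun w.2) :=
          lint_core_le hB₀meas hB₀fin hgmeas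
      _ = ∫⁻ z in A₀, ENNReal.ofReal (‖z‖ ^ 2) := (hlint A₀).symm
      _ = ∫⁻ z in A, ENNReal.ofReal (‖z‖ ^ 2) := setLIntegral_congr hae.symm


end SteinerAux

/-- For successive Steiner symmetrals `F_n` of a Caccioppoli set `F ⊆ B(o,ρ₀)` with
constant `p₀` and `λ_d(F) = κ_d` (each `F_n` again Caccioppoli with constant `p₀`),
the sequence `μ(F_n)` is nonincreasing, and `μ(F_n) → μ_d` iff `F_n → B(o,1)` in the
Nikodym distance. -/
theorem inertia_antitone_and_tendsto_iff (d : ℕ) (ρ₀ p₀ : ℝ)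
    (F : Set (EuclideanSpace ℝ (Fin d))) (hF : MeasurableSet F)
    (hFsub : F ⊆ closedBall (0 : EuclideanSpace ℝ (Fin d)) ρ₀)
    (hvol : volume F = volume (closedBall (0 : EuclideanSpace ℝ (Fin d)) 1))
    (u : ℕ → EuclideanSpace ℝ (Fin d)) (hu : ∀ n, ‖u n‖ = 1)
    (hcacc : ∀ n, ∀ h : EuclideanSpace ℝ (Fin d),
      volume (((fun z => z + h) '' (iterSym d u F n)) ∆ (iterSym d u F n)) ≤
        ENNReal.ofReal (p₀ * ‖h‖)) :
    Antitone (fun n => inertia d (iterSym d u F n)) ∧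
      (Tendsto (fun n => inertia d (iterSym d u F n)) atTop
          (nhds (inertia d (closedBall (0 : EuclideanSpace ℝ (Fin d)) 1))) ↔
        Tendsto (fun n => volume
            ((iterSym d u F n) ∆ closedBall (0 : EuclideanSpace ℝ (Fin d)) 1))
          atTop (nhds 0)) := by
  clear hcacc
  rcases d with _ | m
  · exfalso
    have h0 : ‖u 0‖ = 0 := by simp [EuclideanSpace.norm_eq]
    rw [hu 0] at h0
    norm_num at h0
  set ρ : ℝ := max ρ₀ 1 with hρdef
  have hρ1 : (1 : ℝ) ≤ ρ := le_max_right _ _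
  have hρ0 : (0 : ℝ) ≤ ρ := by linarith
  have hKm : MeasurableSet (closedBall (0 : EuclideanSpace ℝ (Fin (m + 1))) 1) :=
    measurableSet_closedBall
  have hKsub : closedBall (0 : EuclideanSpace ℝ (Fin (m + 1))) 1 ⊆ closedBall 0 ρ :=
    closedBall_subset_closedBall hρ1
  have hρfin : volume (closedBall (0 : EuclideanSpace ℝ (Fin (m + 1))) ρ) ≠ ∞ :=
    measure_closedBall_lt_top.ne
  have hballbd : ∀ z ∈ closedBall (0 : EuclideanSpace ℝ (Fin (m + 1))) ρ,
      ENNReal.ofReal (‖z‖ ^ 2) ≤ ENNReal.ofReal (ρ ^ 2) := by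
    intro z hz
    refine ENNReal.ofReal_le_ofReal ?_
    have h1 : ‖z‖ ≤ ρ := mem_closedBall_zero_iff.mp hz
    nlinarith [norm_nonneg z]
  have hLfin : ∀ A : Set (EuclideanSpace ℝ (Fin (m + 1))), A ⊆ closedBall 0 ρ →
      (∫⁻ z in A, ENNReal.ofReal (‖z‖ ^ 2)) ≠ ∞ := by
    intro A hA
    have h1 := SteinerAux.setLIntegral_le_bound (μ := volume) measurableSet_closedBall hA hballbd
    have h2 : ENNReal.ofReal (ρ ^ 2) * volume A ≠ ∞ :=
      ENNReal.mul_ne_top ENNReal.ofReal_ne_top (ne_top_of_le_ne_top hρfin (measure_mono hA))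
    exact ne_top_of_le_ne_top h2 h1
  have hP : ∀ k, NullMeasurableSet (iterSym (m + 1) u F k) volume ∧
      iterSym (m + 1) u F k ⊆ closedBall 0 ρ ∧
      volume (iterSym (m + 1) u F k)
        = volume (closedBall (0 : EuclideanSpace ℝ (Fin (m + 1))) 1) := by
    intro k
    induction k with
    | zero =>
      exact ⟨hF.nullMeasurableSet,
        fun z hz => closedBall_subset_closedBall (le_max_left _ _) (hFsub hz), hvol⟩
    | succ k ih =>
      obtain ⟨h1, h2, h3, -⟩ := SteinerAux.step hρ0 (hu k) ih.1 ih.2.1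
      exact ⟨h1, h2, h3.trans ih.2.2⟩
  have hmonostep : ∀ k, (∫⁻ z in iterSym (m + 1) u F (k + 1), ENNReal.ofReal (‖z‖ ^ 2)) ≤
      ∫⁻ z in iterSym (m + 1) u F k, ENNReal.ofReal (‖z‖ ^ 2) :=
    fun k => (SteinerAux.step hρ0 (hu k) (hP k).1 (hP k).2.1).2.2.2
  have hinertia : ∀ A : Set (EuclideanSpace ℝ (Fin (m + 1))),
      inertia (m + 1) A = (∫⁻ z in A, ENNReal.ofReal (‖z‖ ^ 2)).toReal := by
    intro A
    rw [inertia, integral_eq_lintegral_of_nonneg_ae (f := fun z => ‖z‖ ^ 2) (ae_of_all _ fun z => by positivity)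
      ((continuous_norm.pow 2).aestronglyMeasurable)]
  -- splitting facts
  have hsplit : ∀ k, (∫⁻ z in iterSym (m + 1) u F k, ENNReal.ofReal (‖z‖ ^ 2))
      = (∫⁻ z in iterSym (m + 1) u F k ∩ closedBall 0 1, ENNReal.ofReal (‖z‖ ^ 2))
        + ∫⁻ z in iterSym (m + 1) u F k \ closedBall 0 1, ENNReal.ofReal (‖z‖ ^ 2) :=
    fun k => SteinerAux.lint_split (hP k).1 hKm.nullMeasurableSet _
  have hsplitK : ∀ k, (∫⁻ z in closedBall (0 : EuclideanSpace ℝ (Fin (m + 1))) 1,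
        ENNReal.ofReal (‖z‖ ^ 2))
      = (∫⁻ z in iterSym (m + 1) u F k ∩ closedBall 0 1, ENNReal.ofReal (‖z‖ ^ 2))
        + ∫⁻ z in closedBall 0 1 \ iterSym (m + 1) u F k, ENNReal.ofReal (‖z‖ ^ 2) := by
    intro k
    have h := SteinerAux.lint_split hKm.nullMeasurableSet (hP k).1
      (fun z => ENNReal.ofReal (‖z‖ ^ 2))
    rwa [Set.inter_comm (closedBall (0 : EuclideanSpace ℝ (Fin (m + 1))) 1)
      (iterSym (m + 1) u F k)] at h
  have hfinIK : ∀ k, (∫⁻ z in iterSym (m + 1) u F k ∩ closedBall 0 1,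
      ENNReal.ofReal (‖z‖ ^ 2)) ≠ ∞ :=
    fun k => hLfin _ (Set.inter_subset_left.trans (hP k).2.1)
  have hfinAK : ∀ k, (∫⁻ z in iterSym (m + 1) u F k \ closedBall 0 1,
      ENNReal.ofReal (‖z‖ ^ 2)) ≠ ∞ :=
    fun k => hLfin _ (Set.diff_subset.trans (hP k).2.1)
  have hfinKA : ∀ k, (∫⁻ z in closedBall (0 : EuclideanSpace ℝ (Fin (m + 1))) 1 \
      iterSym (m + 1) u F k, ENNReal.ofReal (‖z‖ ^ 2)) ≠ ∞ :=
    fun k => hLfin _ (Set.diff_subset.trans hKsub)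
  have hkey : ∀ k, inertia (m + 1) (iterSym (m + 1) u F k)
      - inertia (m + 1) (closedBall (0 : EuclideanSpace ℝ (Fin (m + 1))) 1)
      = (∫⁻ z in iterSym (m + 1) u F k \ closedBall 0 1, ENNReal.ofReal (‖z‖ ^ 2)).toReal
        - (∫⁻ z in closedBall 0 1 \ iterSym (m + 1) u F k, ENNReal.ofReal (‖z‖ ^ 2)).toReal := by
    intro k
    rw [hinertia, hinertia, hsplit k, hsplitK k,
      ENNReal.toReal_add (hfinIK k) (hfinAK k), ENNReal.toReal_add (hfinIK k) (hfinKA k)]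
    ring
  have hvol_eq : ∀ k, volume (iterSym (m + 1) u F k \ closedBall 0 1)
      = volume (closedBall (0 : EuclideanSpace ℝ (Fin (m + 1))) 1 \ iterSym (m + 1) u F k) := by
    intro k
    have h1 := SteinerAux.meas_split (μ := volume) (hP k).1 hKm.nullMeasurableSet
    have h2 := SteinerAux.meas_split (μ := volume) hKm.nullMeasurableSet (hP k).1
    rw [Set.inter_comm (closedBall (0 : EuclideanSpace ℝ (Fin (m + 1))) 1)
      (iterSym (m + 1) u F k)] at h2
    rw [(hP k).2.2] at h1
    have hfin' : volume (iterSym (m + 1) u F k ∩ closedBall 0 1) ≠ ∞ :=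
      ne_top_of_le_ne_top hρfin (measure_mono (Set.inter_subset_left.trans (hP k).2.1))
    exact (ENNReal.add_right_inj hfin').mp (h1.symm.trans h2)
  have hFnK : ∀ k, iterSym (m + 1) u F k ∆ closedBall 0 1 ⊆
      closedBall (0 : EuclideanSpace ℝ (Fin (m + 1))) ρ := by
    intro k
    rw [Set.symmDiff_def]
    exact Set.union_subset (Set.diff_subset.trans (hP k).2.1) (Set.diff_subset.trans hKsub)
  have hΔfin : ∀ k, volume (iterSym (m + 1) u F k ∆ closedBall 0 1) ≠ ∞ :=
    fun k => ne_top_of_le_ne_top hρfin (measure_mono (hFnK k))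
  have hsubΔ1 : ∀ k, iterSym (m + 1) u F k \ closedBall 0 1 ⊆
      iterSym (m + 1) u F k ∆ closedBall 0 1 := by
    intro k
    rw [Set.symmDiff_def]
    exact Set.subset_union_left
  have hsubΔ2 : ∀ k, closedBall (0 : EuclideanSpace ℝ (Fin (m + 1))) 1 \ iterSym (m + 1) u F k ⊆
      iterSym (m + 1) u F k ∆ closedBall 0 1 := by
    intro k
    rw [Set.symmDiff_def]
    exact Set.subset_union_right
  constructor
  · -- Antitone
    refine antitone_nat_of_succ_le fun k => ?_
    show inertia (m + 1) (iterSym (m + 1) u F (k + 1)) ≤ inertia (m + 1) (iterSym (m + 1) u F k)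
    rw [hinertia, hinertia]
    exact ENNReal.toReal_mono (hLfin _ (hP k).2.1) (hmonostep k)
  constructor
  · -- inertia tendsto → volume tendsto
    intro hT
    have hε : Tendsto (fun k => inertia (m + 1) (iterSym (m + 1) u F k)
        - inertia (m + 1) (closedBall (0 : EuclideanSpace ℝ (Fin (m + 1))) 1)) atTop (nhds 0) := by
      have h := hT.sub_const (inertia (m + 1) (closedBall (0 : EuclideanSpace ℝ (Fin (m + 1))) 1))
      simpa using h
    -- shrinking closed balls
    have hW : Tendsto (fun j : ℕ => volume ((closedBall (0 : EuclideanSpace ℝ (Fin (m + 1))) 1) \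
        closedBall 0 (1 - 1 / (j + 1)))) atTop (nhds 0) := by
      have hmeas : ∀ j : ℕ, NullMeasurableSet ((closedBall (0 : EuclideanSpace ℝ (Fin (m + 1))) 1) \
          closedBall 0 (1 - 1 / (j + 1))) volume :=
        fun j => (hKm.diff measurableSet_closedBall).nullMeasurableSet
      have hanti : Antitone (fun j : ℕ => (closedBall (0 : EuclideanSpace ℝ (Fin (m + 1))) 1) \
          closedBall 0 (1 - 1 / (j + 1))) := by
        intro i j hij
        refine Set.diff_subset_diff_right (closedBall_subset_closedBall ?_)
        have h1 : (1 : ℝ) / (j + 1) ≤ 1 / (i + 1) := by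
          refine one_div_le_one_div_of_le (by positivity) ?_
          have : (i : ℝ) ≤ (j : ℝ) := Nat.cast_le.mpr hij
          linarith
        linarith
      have hfin' : ∃ j : ℕ, volume ((closedBall (0 : EuclideanSpace ℝ (Fin (m + 1))) 1) \
          closedBall 0 (1 - 1 / (j + 1))) ≠ ∞ :=
        ⟨0, ne_top_of_le_ne_top hρfin (measure_mono (Set.diff_subset.trans hKsub))⟩
      have htend := tendsto_measure_iInter_atTop hmeas hanti hfin'
      have hInter : ⋂ j : ℕ, ((closedBall (0 : EuclideanSpace ℝ (Fin (m + 1))) 1) \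
          closedBall 0 (1 - 1 / (j + 1)))
          = closedBall (0 : EuclideanSpace ℝ (Fin (m + 1))) 1 \ ball 0 1 := by
        rw [← Set.diff_iUnion]
        congr 1
        ext z
        simp only [Set.mem_iUnion, mem_closedBall_zero_iff, mem_ball_zero_iff]
        constructor
        · rintro ⟨j, hj⟩
          have h1 : (0 : ℝ) < 1 / (j + 1) := by positivity
          linarith
        · intro hz
          obtain ⟨j, hj⟩ := exists_nat_one_div_lt (by linarith : (0 : ℝ) < 1 - ‖z‖)
          exact ⟨j, by linarith⟩
      rw [hInter] at htend
      have hzero : volume ((closedBall (0 : EuclideanSpace ℝ (Fin (m + 1))) 1) \ ball 0 1) = 0 := by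
        refine measure_mono_null ?_ (Measure.addHaar_sphere volume 0 1)
        intro z hz
        rw [mem_sphere_zero_iff_norm]
        have h1 : ‖z‖ ≤ 1 := mem_closedBall_zero_iff.mp hz.1
        have h2 : ¬ ‖z‖ < 1 := fun hlt => hz.2 (mem_ball_zero_iff.mpr hlt)
        exact le_antisymm h1 (not_lt.mp h2)
      rw [hzero] at htend
      exact htend
    -- the quantitative estimate
    have hest : ∀ r : ℝ, 0 ≤ r → ∀ k,
        (1 - r ^ 2) * (volume ((closedBall (0 : EuclideanSpace ℝ (Fin (m + 1))) 1 \
            iterSym (m + 1) u F k) ∩ closedBall 0 r)).toReal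
          ≤ inertia (m + 1) (iterSym (m + 1) u F k)
            - inertia (m + 1) (closedBall (0 : EuclideanSpace ℝ (Fin (m + 1))) 1) := by
      intro r hr0 k
      have hKA_nm : NullMeasurableSet
          (closedBall (0 : EuclideanSpace ℝ (Fin (m + 1))) 1 \ iterSym (m + 1) u F k) volume :=
        hKm.nullMeasurableSet.diff (hP k).1
      have hrm : MeasurableSet (closedBall (0 : EuclideanSpace ℝ (Fin (m + 1))) r) :=
        measurableSet_closedBall
      have hs := SteinerAux.lint_split hKA_nm hrm.nullMeasurableSet
        (fun z => ENNReal.ofReal (‖z‖ ^ 2))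
      have hms := SteinerAux.meas_split (μ := volume) hKA_nm hrm.nullMeasurableSet
      -- finiteness of pieces
      have hsubKA : closedBall (0 : EuclideanSpace ℝ (Fin (m + 1))) 1 \ iterSym (m + 1) u F k ⊆
          closedBall 0 ρ := Set.diff_subset.trans hKsub
      have hfin1 : volume ((closedBall (0 : EuclideanSpace ℝ (Fin (m + 1))) 1 \
          iterSym (m + 1) u F k) ∩ closedBall 0 r) ≠ ∞ :=
        ne_top_of_le_ne_top hρfin (measure_mono (Set.inter_subset_left.trans hsubKA))
      have hfin2 : volume ((closedBall (0 : EuclideanSpace ℝ (Fin (m + 1))) 1 \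
          iterSym (m + 1) u F k) \ closedBall 0 r) ≠ ∞ :=
        ne_top_of_le_ne_top hρfin (measure_mono (Set.diff_subset.trans hsubKA))
      have hfinl1 : (∫⁻ z in (closedBall (0 : EuclideanSpace ℝ (Fin (m + 1))) 1 \
          iterSym (m + 1) u F k) ∩ closedBall 0 r, ENNReal.ofReal (‖z‖ ^ 2)) ≠ ∞ :=
        hLfin _ (Set.inter_subset_left.trans hsubKA)
      have hfinl2 : (∫⁻ z in (closedBall (0 : EuclideanSpace ℝ (Fin (m + 1))) 1 \
          iterSym (m + 1) u F k) \ closedBall 0 r, ENNReal.ofReal (‖z‖ ^ 2)) ≠ ∞ :=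
        hLfin _ (Set.diff_subset.trans hsubKA)
      -- upper bounds on the two pieces of j2
      have hb1 : (∫⁻ z in (closedBall (0 : EuclideanSpace ℝ (Fin (m + 1))) 1 \
          iterSym (m + 1) u F k) ∩ closedBall 0 r, ENNReal.ofReal (‖z‖ ^ 2))
          ≤ ENNReal.ofReal (r ^ 2) * volume ((closedBall (0 : EuclideanSpace ℝ (Fin (m + 1))) 1 \
            iterSym (m + 1) u F k) ∩ closedBall 0 r) := by
        refine SteinerAux.setLIntegral_le_bound hrm Set.inter_subset_right ?_
        intro z hz
        refine ENNReal.ofReal_le_ofReal ?_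
        have h1 : ‖z‖ ≤ r := mem_closedBall_zero_iff.mp hz
        nlinarith [norm_nonneg z]
      have hb2 : (∫⁻ z in (closedBall (0 : EuclideanSpace ℝ (Fin (m + 1))) 1 \
          iterSym (m + 1) u F k) \ closedBall 0 r, ENNReal.ofReal (‖z‖ ^ 2))
          ≤ 1 * volume ((closedBall (0 : EuclideanSpace ℝ (Fin (m + 1))) 1 \
            iterSym (m + 1) u F k) \ closedBall 0 r) := by
        refine SteinerAux.setLIntegral_le_bound hKm
          (Set.diff_subset.trans Set.diff_subset) ?_
        intro z hz
        have h1 : ‖z‖ ≤ 1 := mem_closedBall_zero_iff.mp hz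
        rw [← ENNReal.ofReal_one]
        refine ENNReal.ofReal_le_ofReal ?_
        nlinarith [norm_nonneg z]
      -- lower bound on j1
      have hANm : NullMeasurableSet (iterSym (m + 1) u F k \ closedBall 0 1) volume :=
        (hP k).1.diff hKm.nullMeasurableSet
      have hb3 : 1 * volume (iterSym (m + 1) u F k \ closedBall 0 1)
          ≤ ∫⁻ z in iterSym (m + 1) u F k \ closedBall 0 1, ENNReal.ofReal (‖z‖ ^ 2) := by
        refine SteinerAux.setLIntegral_ge_bound hANm hKm.compl (fun z hz => hz.2) ?_
        intro z hz
        have h1 : ¬ ‖z‖ ≤ 1 := fun h => hz (mem_closedBall_zero_iff.mpr h)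
        push_neg at h1
        rw [← ENNReal.ofReal_one]
        refine ENNReal.ofReal_le_ofReal ?_
        nlinarith
      -- to the reals
      rw [hkey k]
      have hrj2 : (∫⁻ z in closedBall (0 : EuclideanSpace ℝ (Fin (m + 1))) 1 \
          iterSym (m + 1) u F k, ENNReal.ofReal (‖z‖ ^ 2)).toReal
          = (∫⁻ z in (closedBall (0 : EuclideanSpace ℝ (Fin (m + 1))) 1 \
              iterSym (m + 1) u F k) ∩ closedBall 0 r, ENNReal.ofReal (‖z‖ ^ 2)).toReal
            + (∫⁻ z in (closedBall (0 : EuclideanSpace ℝ (Fin (m + 1))) 1 \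
              iterSym (m + 1) u F k) \ closedBall 0 r, ENNReal.ofReal (‖z‖ ^ 2)).toReal := by
        rw [hs, ENNReal.toReal_add hfinl1 hfinl2]
      have hrb1 : (∫⁻ z in (closedBall (0 : EuclideanSpace ℝ (Fin (m + 1))) 1 \
          iterSym (m + 1) u F k) ∩ closedBall 0 r, ENNReal.ofReal (‖z‖ ^ 2)).toReal
          ≤ r ^ 2 * (volume ((closedBall (0 : EuclideanSpace ℝ (Fin (m + 1))) 1 \
            iterSym (m + 1) u F k) ∩ closedBall 0 r)).toReal := by
        have := ENNReal.toReal_mono (ENNReal.mul_ne_top ENNReal.ofReal_ne_top hfin1) hb1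
        rwa [ENNReal.toReal_mul, ENNReal.toReal_ofReal (by positivity)] at this
      have hrb2 : (∫⁻ z in (closedBall (0 : EuclideanSpace ℝ (Fin (m + 1))) 1 \
          iterSym (m + 1) u F k) \ closedBall 0 r, ENNReal.ofReal (‖z‖ ^ 2)).toReal
          ≤ (volume ((closedBall (0 : EuclideanSpace ℝ (Fin (m + 1))) 1 \
            iterSym (m + 1) u F k) \ closedBall 0 r)).toReal := by
        have := ENNReal.toReal_mono (by rw [one_mul]; exact hfin2) hb2
        rwa [one_mul] at this
      have hrb3 : (volume (iterSym (m + 1) u F k \ closedBall 0 1)).toReal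
          ≤ (∫⁻ z in iterSym (m + 1) u F k \ closedBall 0 1, ENNReal.ofReal (‖z‖ ^ 2)).toReal := by
        have := ENNReal.toReal_mono (hfinAK k) hb3
        rwa [one_mul] at this
      have hrms : (volume (closedBall (0 : EuclideanSpace ℝ (Fin (m + 1))) 1 \
          iterSym (m + 1) u F k)).toReal
          = (volume ((closedBall (0 : EuclideanSpace ℝ (Fin (m + 1))) 1 \
              iterSym (m + 1) u F k) ∩ closedBall 0 r)).toReal
            + (volume ((closedBall (0 : EuclideanSpace ℝ (Fin (m + 1))) 1 \
              iterSym (m + 1) u F k) \ closedBall 0 r)).toReal := by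
        rw [hms, ENNReal.toReal_add hfin1 hfin2]
      have hveq : (volume (iterSym (m + 1) u F k \ closedBall 0 1)).toReal
          = (volume (closedBall (0 : EuclideanSpace ℝ (Fin (m + 1))) 1 \
            iterSym (m + 1) u F k)).toReal := by rw [hvol_eq k]
      linarith
    -- now conclude
    have hΔvol2 : ∀ k, (volume (iterSym (m + 1) u F k ∆ closedBall 0 1)).toReal
        ≤ 2 * (volume (closedBall (0 : EuclideanSpace ℝ (Fin (m + 1))) 1 \
          iterSym (m + 1) u F k)).toReal := by
      intro k
      have h1 : volume (iterSym (m + 1) u F k ∆ closedBall 0 1)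
          ≤ volume (iterSym (m + 1) u F k \ closedBall 0 1)
            + volume (closedBall (0 : EuclideanSpace ℝ (Fin (m + 1))) 1 \
              iterSym (m + 1) u F k) := by
        rw [Set.symmDiff_def]
        exact measure_union_le _ _
      have hfa : volume (iterSym (m + 1) u F k \ closedBall 0 1) ≠ ∞ :=
        ne_top_of_le_ne_top hρfin (measure_mono (Set.diff_subset.trans (hP k).2.1))
      have hfb : volume (closedBall (0 : EuclideanSpace ℝ (Fin (m + 1))) 1 \
          iterSym (m + 1) u F k) ≠ ∞ :=
        ne_top_of_le_ne_top hρfin (measure_mono (Set.diff_subset.trans hKsub))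
      have h2 := ENNReal.toReal_mono (by exact ENNReal.add_ne_top.mpr ⟨hfa, hfb⟩) h1
      rw [ENNReal.toReal_add hfa hfb] at h2
      have h3 : (volume (iterSym (m + 1) u F k \ closedBall 0 1)).toReal
          = (volume (closedBall (0 : EuclideanSpace ℝ (Fin (m + 1))) 1 \
            iterSym (m + 1) u F k)).toReal := by rw [hvol_eq k]
      linarith
    refine (ENNReal.tendsto_toReal_iff hΔfin (by simp : (0 : ℝ≥0∞) ≠ ∞)).mp ?_
    rw [ENNReal.toReal_zero]
    rw [Metric.tendsto_atTop]
    intro η hη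
    -- choose the radius
    have hWr : Tendsto (fun j : ℕ => (volume ((closedBall (0 : EuclideanSpace ℝ (Fin (m + 1))) 1) \
        closedBall 0 (1 - 1 / (j + 1)))).toReal) atTop (nhds 0) := by
      have h := (ENNReal.tendsto_toReal (by simp : (0 : ℝ≥0∞) ≠ ∞)).comp hW
      simpa [Function.comp_def] using h
    rw [Metric.tendsto_atTop] at hWr
    obtain ⟨J, hJ⟩ := hWr (η / 4) (by positivity)
    have hJ' := hJ J le_rfl
    rw [Real.dist_eq, sub_zero, abs_of_nonneg ENNReal.toReal_nonneg] at hJ'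
    set r : ℝ := 1 - 1 / (J + 1) with hrdef
    have hr0 : 0 ≤ r := by
      rw [hrdef]
      have h1 : (1 : ℝ) / (J + 1) ≤ 1 := by
        rw [div_le_one (by positivity)]
        have : (0:ℝ) ≤ (J : ℝ) := Nat.cast_nonneg J
        linarith
      linarith
    have hr1 : r < 1 := by
      rw [hrdef]
      have h1 : (0 : ℝ) < 1 / (J + 1) := by positivity
      linarith
    have hc : 0 < 1 - r ^ 2 := by nlinarith
    rw [Metric.tendsto_atTop] at hε
    obtain ⟨N, hN⟩ := hε ((1 - r ^ 2) * (η / 4)) (by positivity)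
    refine ⟨N, fun k hk => ?_⟩
    rw [Real.dist_eq, sub_zero, abs_of_nonneg ENNReal.toReal_nonneg]
    -- m1 < η/4
    have hεk := hN k hk
    rw [Real.dist_eq, sub_zero] at hεk
    have hεk' : inertia (m + 1) (iterSym (m + 1) u F k)
        - inertia (m + 1) (closedBall (0 : EuclideanSpace ℝ (Fin (m + 1))) 1)
        < (1 - r ^ 2) * (η / 4) := lt_of_le_of_lt (le_abs_self _) hεk
    have hm1 : (volume ((closedBall (0 : EuclideanSpace ℝ (Fin (m + 1))) 1 \
        iterSym (m + 1) u F k) ∩ closedBall 0 r)).toReal < η / 4 := by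
      have h1 := hest r hr0 k
      have h2 : (1 - r ^ 2) * (volume ((closedBall (0 : EuclideanSpace ℝ (Fin (m + 1))) 1 \
          iterSym (m + 1) u F k) ∩ closedBall 0 r)).toReal < (1 - r ^ 2) * (η / 4) :=
        lt_of_le_of_lt h1 hεk'
      exact (mul_lt_mul_iff_right₀ hc).mp h2
    -- m2 ≤ W J < η/4
    have hm2 : (volume ((closedBall (0 : EuclideanSpace ℝ (Fin (m + 1))) 1 \
        iterSym (m + 1) u F k) \ closedBall 0 r)).toReal < η / 4 := by
      have h1 : volume ((closedBall (0 : EuclideanSpace ℝ (Fin (m + 1))) 1 \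
          iterSym (m + 1) u F k) \ closedBall 0 r)
          ≤ volume ((closedBall (0 : EuclideanSpace ℝ (Fin (m + 1))) 1) \ closedBall 0 r) := by
        refine measure_mono ?_
        intro z hz
        exact ⟨hz.1.1, hz.2⟩
      have h2 : volume ((closedBall (0 : EuclideanSpace ℝ (Fin (m + 1))) 1) \ closedBall 0 r)
          ≠ ∞ := ne_top_of_le_ne_top hρfin (measure_mono (Set.diff_subset.trans hKsub))
      have h3 := ENNReal.toReal_mono h2 h1
      exact lt_of_le_of_lt h3 hJ'
    -- combine
    have hKA_nm : NullMeasurableSet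
        (closedBall (0 : EuclideanSpace ℝ (Fin (m + 1))) 1 \ iterSym (m + 1) u F k) volume :=
      hKm.nullMeasurableSet.diff (hP k).1
    have hrm : MeasurableSet (closedBall (0 : EuclideanSpace ℝ (Fin (m + 1))) r) :=
      measurableSet_closedBall
    have hms := SteinerAux.meas_split (μ := volume) hKA_nm hrm.nullMeasurableSet
    have hfin1 : volume ((closedBall (0 : EuclideanSpace ℝ (Fin (m + 1))) 1 \
        iterSym (m + 1) u F k) ∩ closedBall 0 r) ≠ ∞ :=
      ne_top_of_le_ne_top hρfin
        (measure_mono (Set.inter_subset_left.trans (Set.diff_subset.trans hKsub)))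
    have hfin2 : volume ((closedBall (0 : EuclideanSpace ℝ (Fin (m + 1))) 1 \
        iterSym (m + 1) u F k) \ closedBall 0 r) ≠ ∞ :=
      ne_top_of_le_ne_top hρfin
        (measure_mono (Set.diff_subset.trans (Set.diff_subset.trans hKsub)))
    have hrms : (volume (closedBall (0 : EuclideanSpace ℝ (Fin (m + 1))) 1 \
        iterSym (m + 1) u F k)).toReal
        = (volume ((closedBall (0 : EuclideanSpace ℝ (Fin (m + 1))) 1 \
            iterSym (m + 1) u F k) ∩ closedBall 0 r)).toReal
          + (volume ((closedBall (0 : EuclideanSpace ℝ (Fin (m + 1))) 1 \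
            iterSym (m + 1) u F k) \ closedBall 0 r)).toReal := by
      rw [hms, ENNReal.toReal_add hfin1 hfin2]
    have hfinal := hΔvol2 k
    linarith
  · -- volume tendsto → inertia tendsto
    intro hvΔ
    have hb : ∀ k, |inertia (m + 1) (iterSym (m + 1) u F k)
        - inertia (m + 1) (closedBall (0 : EuclideanSpace ℝ (Fin (m + 1))) 1)|
        ≤ (ENNReal.ofReal (ρ ^ 2) * volume (iterSym (m + 1) u F k ∆ closedBall 0 1)).toReal := by
      intro k
      rw [hkey k]
      have hmulfin : ENNReal.ofReal (ρ ^ 2) *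
          volume (iterSym (m + 1) u F k ∆ closedBall 0 1) ≠ ∞ :=
        ENNReal.mul_ne_top ENNReal.ofReal_ne_top (hΔfin k)
      have hj1 : (∫⁻ z in iterSym (m + 1) u F k \ closedBall 0 1,
          ENNReal.ofReal (‖z‖ ^ 2)).toReal
          ≤ (ENNReal.ofReal (ρ ^ 2) * volume (iterSym (m + 1) u F k ∆ closedBall 0 1)).toReal := by
        refine ENNReal.toReal_mono hmulfin ?_
        calc (∫⁻ z in iterSym (m + 1) u F k \ closedBall 0 1, ENNReal.ofReal (‖z‖ ^ 2))
            ≤ ENNReal.ofReal (ρ ^ 2) * volume (iterSym (m + 1) u F k \ closedBall 0 1) :=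
              SteinerAux.setLIntegral_le_bound measurableSet_closedBall
                (Set.diff_subset.trans (hP k).2.1) hballbd
          _ ≤ ENNReal.ofReal (ρ ^ 2) * volume (iterSym (m + 1) u F k ∆ closedBall 0 1) :=
              mul_le_mul_right (measure_mono (hsubΔ1 k)) _
      have hj2 : (∫⁻ z in closedBall (0 : EuclideanSpace ℝ (Fin (m + 1))) 1 \
          iterSym (m + 1) u F k, ENNReal.ofReal (‖z‖ ^ 2)).toReal
          ≤ (ENNReal.ofReal (ρ ^ 2) * volume (iterSym (m + 1) u F k ∆ closedBall 0 1)).toReal := by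
        refine ENNReal.toReal_mono hmulfin ?_
        calc (∫⁻ z in closedBall (0 : EuclideanSpace ℝ (Fin (m + 1))) 1 \
              iterSym (m + 1) u F k, ENNReal.ofReal (‖z‖ ^ 2))
            ≤ ENNReal.ofReal (ρ ^ 2) * volume (closedBall (0 : EuclideanSpace ℝ (Fin (m + 1))) 1 \
              iterSym (m + 1) u F k) :=
              SteinerAux.setLIntegral_le_bound measurableSet_closedBall
                (Set.diff_subset.trans hKsub) hballbd
          _ ≤ ENNReal.ofReal (ρ ^ 2) * volume (iterSym (m + 1) u F k ∆ closedBall 0 1) :=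
              mul_le_mul_right (measure_mono (hsubΔ2 k)) _
      rw [abs_sub_le_iff]
      constructor
      · nlinarith [ENNReal.toReal_nonneg (a := ∫⁻ z in closedBall
          (0 : EuclideanSpace ℝ (Fin (m + 1))) 1 \ iterSym (m + 1) u F k,
          ENNReal.ofReal (‖z‖ ^ 2))]
      · nlinarith [ENNReal.toReal_nonneg (a := ∫⁻ z in iterSym (m + 1) u F k \
          closedBall (0 : EuclideanSpace ℝ (Fin (m + 1))) 1, ENNReal.ofReal (‖z‖ ^ 2))]
    have hb0 : Tendsto (fun k => (ENNReal.ofReal (ρ ^ 2) *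
        volume (iterSym (m + 1) u F k ∆ closedBall 0 1)).toReal) atTop (nhds 0) := by
      have h1 : Tendsto (fun k => ENNReal.ofReal (ρ ^ 2) *
          volume (iterSym (m + 1) u F k ∆ closedBall 0 1)) atTop
          (nhds (ENNReal.ofReal (ρ ^ 2) * 0)) :=
        ENNReal.Tendsto.const_mul hvΔ (Or.inr ENNReal.ofReal_ne_top)
      rw [mul_zero] at h1
      have h2 := (ENNReal.tendsto_toReal (by simp : (0 : ℝ≥0∞) ≠ ∞)).comp h1
      simpa only [Function.comp_def, ENNReal.toReal_zero] using h2
    rw [tendsto_iff_dist_tendsto_zero]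
    refine squeeze_zero (fun k => dist_nonneg) (fun k => ?_) hb0
    rw [Real.dist_eq]
    exact hb k
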